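/- The function f(x,y) = (√x − √y)² is convex on the quadrant {(x,y) : x ≥ 0, y ≥ 0}. -/

import Mathlib

/-! Expanding the square, `(√x - √y) ^ 2 = x + y - 2 √x √y`, a linear function minus twice the
geometric mean `√x √y`. The geometric mean is positively homogeneous and, by the two-dimensional
Cauchy–Schwarz inequality, superadditive on the quadrant, hence concave there. -/

open Real Set

theorem sqrt_mul_sqrt_add_sqrt_mul_sqrt_le {a b c d : ℝ} (ha : 0 ≤ a) (hb : 0 ≤ b) (hc : 0 ≤ c)
    (hd : 0 ≤ d) : √a * √b + √c * √d ≤ √(a + c) * √(b + d) := by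
  rw [← sqrt_mul (add_nonneg ha hc)]
  apply le_sqrt_of_sq_le
  nlinarith [sq_nonneg (√a * √d - √c * √b), sq_sqrt ha, sq_sqrt hb, sq_sqrt hc, sq_sqrt hd]

theorem concaveOn_sqrt_mul_sqrt :
    ConcaveOn ℝ (Ici (0 : ℝ × ℝ)) (fun p : ℝ × ℝ => √p.1 * √p.2) := by
  refine ⟨convex_Ici 0, ?_⟩
  intro p hp q hq t s ht hs _
  calc t • (√p.1 * √p.2) + s • (√q.1 * √q.2)
      = √(t * p.1) * √(t * p.2) + √(s * q.1) * √(s * q.2) := by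
        simp only [smul_eq_mul, sqrt_mul ht, sqrt_mul hs]
        linear_combination (√p.1 * √p.2) * (mul_self_sqrt ht).symm +
          (√q.1 * √q.2) * (mul_self_sqrt hs).symm
    _ ≤ √(t * p.1 + s * q.1) * √(t * p.2 + s * q.2) :=
        sqrt_mul_sqrt_add_sqrt_mul_sqrt_le (mul_nonneg ht hp.1) (mul_nonneg ht hp.2)
          (mul_nonneg hs hq.1) (mul_nonneg hs hq.2)
    _ = √(t • p + s • q).1 * √(t • p + s • q).2 := rfl

/-- The function f(x,y) = (√x − √y)² is convex on the closed first quadrant. -/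
theorem stmt_2 :
    ConvexOn ℝ {p : ℝ × ℝ | 0 ≤ p.1 ∧ 0 ≤ p.2}
      (fun p : ℝ × ℝ => (Real.sqrt p.1 - Real.sqrt p.2) ^ 2) := by
  have hlinear : ConvexOn ℝ (Ici (0 : ℝ × ℝ)) (LinearMap.fst ℝ ℝ ℝ + LinearMap.snd ℝ ℝ ℝ) :=
    LinearMap.convexOn _ (convex_Ici 0)
  refine (hlinear.sub (concaveOn_sqrt_mul_sqrt.smul zero_le_two)).congr ?_
  rintro p ⟨hp₁, hp₂⟩
  simp only [Pi.sub_apply, LinearMap.add_apply, LinearMap.fst_apply,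
    LinearMap.snd_apply, smul_eq_mul, sub_sq, sq_sqrt hp₁, sq_sqrt hp₂]
  ring
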